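/- For any two words w0, w1 over {x,y} with the same number of x's and the same number of y's, there exist decompositions w0 = w0^0 w0^1 ⋯ w0^{2k-1} and w1 = w1^0 w1^1 ⋯ w1^{2k-1} such that for each index i the subwords w0^i and w1^i have the same number of each symbol, w0^i ≤ w1^i when i is even, and w1^i ≤ w0^i when i is odd. -/

import Mathlib

open scoped Classical

/-- Words over the two-letter alphabet {x,y}; `false` is `x`, `true` is `y`. -/
abbrev Word := List Bool

/-- 0-indexed positions of the x's (`false`) in a word. -/
def xIdx (w : Word) : List ℕ :=
  (List.range w.length).filter (fun j => w.getD j true = false)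

/-- 0-indexed positions of the y's (`true`) in a word. -/
def yIdx (w : Word) : List ℕ :=
  (List.range w.length).filter (fun j => w.getD j false = true)

/-- `fX w i` = number of y's strictly left of the i-th x of `w` (i is 0-indexed). -/
def fX (w : Word) (i : ℕ) : ℕ := (xIdx w).getD i 0 - i

/-- `fY w j` = number of x's strictly left of the j-th y of `w` (j is 0-indexed). -/
def fY (w : Word) (j : ℕ) : ℕ := (yIdx w).getD j 0 - j

/-- `hX w i` = (1-indexed) position of the i-th x of `w` (i is 0-indexed). -/
def hX (w : Word) (i : ℕ) : ℕ := (xIdx w).getD i 0 + 1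

/-- The pawn-move partial order: same letter counts, and each x of `w0` lies at a
position at most that of the corresponding x of `w1`. -/
def wle (w0 w1 : Word) : Prop :=
  w0.count false = w1.count false ∧ w0.count true = w1.count true ∧
  ∀ i < w0.count false, (xIdx w0).getD i 0 ≤ (xIdx w1).getD i 0

/-- Creation operator `a*_{s,i}` on words: `i = 0` prepends `s`; `1 ≤ i ≤ n_s`
replaces the i-th `s` by `ss`; `i = n_s + 1` appends `s`. -/
def create (s : Bool) : ℕ → Word → Word
  | 0, w => s :: w
  | _+1, [] => [s]
  | i+1, a :: w =>
    if a = s then (if i = 0 then s :: s :: w else a :: create s i w)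
    else a :: create s (i+1) w

/-- Delete the i-th occurrence (1-indexed) of `s`. -/
def delNth (s : Bool) : ℕ → Word → Word
  | _, [] => []
  | i, a :: w => if a = s then (if i ≤ 1 then w else a :: delNth s (i-1) w)
                 else a :: delNth s i w

/-- Annihilation operator `a_{s,i}` on words: `i = 0` deletes an initial `s` (else 0);
`1 ≤ i ≤ n_s` deletes the i-th `s`; `i = n_s + 1` deletes a final `s` (else 0). -/
def annih (s : Bool) (i : ℕ) (w : Word) : Option Word :=
  if i = 0 then
    match w with
    | a :: t => if a = s then some t else none
    | [] => none
  else if i ≤ w.count s then some (delNth s i w)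
  else if i = w.count s + 1 then
    if w.getLast? = some s then some w.dropLast else none
  else none

/-- The free ℤ-module on words: the Fock space `F`. -/
abbrev FS := Word →₀ ℤ

/-- Basis vector of a word. -/
noncomputable def δ (w : Word) : FS := Finsupp.single w 1

/-- `0` for `none`, basis vector for `some`. -/
noncomputable def optδ (o : Option Word) : FS := o.elim 0 δ

/-- Extend a word-indexed family of vectors to a linear map on `FS`. -/
noncomputable def opOf (g : Word → FS) : FS →ₗ[ℤ] FS := Finsupp.lift FS ℤ Word g

/-- Creation operator as a linear map. -/
noncomputable def Cr (s : Bool) (i : ℕ) : FS →ₗ[ℤ] FS := opOf (fun w => δ (create s i w))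

/-- Annihilation operator as a linear map. -/
noncomputable def An (s : Bool) (i : ℕ) : FS →ₗ[ℤ] FS := opOf (fun w => optδ (annih s i w))

/-- Boolean bilinear form on words: `1` if `w0 ≤ w1` in the pawn-move order, else `0`. -/
noncomputable def pairW (w0 w1 : Word) : ℤ := if wle w0 w1 then 1 else 0

/-- Bilinear extension of `pairW` to the free module. -/
noncomputable def pairF (u v : FS) : ℤ :=
  u.sum fun w0 a => v.sum fun w1 b => a * b * pairW w0 w1

/-- Kronecker delta form on words. -/
noncomputable def dotW (w0 w1 : Word) : ℤ := if w0 = w1 then 1 else 0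

/-- Bilinear extension of `dotW`: words form an orthonormal basis. -/
noncomputable def dotF (u v : FS) : ℤ :=
  u.sum fun w0 a => v.sum fun w1 b => a * b * dotW w0 w1

/-- All words of a given length. -/
noncomputable def wordsOfLen (n : ℕ) : Finset Word :=
  (Finset.univ : Finset (Fin n → Bool)).image List.ofFn

/-- Swap `xy → yx` at the x's whose (0-indexed) number lies in `T`;
the counter `k` records how many x's have been passed. -/
def psiX (T : Finset ℕ) : Word → ℕ → Word
  | [], _ => []
  | false :: true :: w, k =>
      if k ∈ T then true :: false :: psiX T w (k+1)
      else false :: psiX T (true :: w) (k+1)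
  | false :: w, k => false :: psiX T w (k+1)
  | true :: w, k => true :: psiX T w k
  termination_by w _ => w.length
  decreasing_by all_goals (simp <;> omega)

/-- Swap `yx → xy` at the y's whose (0-indexed) number lies in `T`. -/
def psiY (T : Finset ℕ) : Word → ℕ → Word
  | [], _ => []
  | true :: false :: w, k =>
      if k ∈ T then false :: true :: psiY T w (k+1)
      else true :: psiY T (false :: w) (k+1)
  | true :: w, k => true :: psiY T w (k+1)
  | false :: w, k => false :: psiY T w k
  termination_by w _ => w.length
  decreasing_by all_goals (simp <;> omega)

/-- `Ex w`: 0-indexed numbers of the x's of `w` immediately followed by a y. -/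
noncomputable def Ex (w : Word) : Finset ℕ :=
  (Finset.range (w.count false)).filter
    (fun i => w.getD ((xIdx w).getD i 0 + 1) false = true)

/-- `Ey w`: 0-indexed numbers of the y's of `w` immediately followed by an x. -/
noncomputable def Ey (w : Word) : Finset ℕ :=
  (Finset.range (w.count true)).filter
    (fun i => w.getD ((yIdx w).getD i 0 + 1) true = false)

/-! Let `d t` be the number of x's in the length-`t` prefix of `w0` minus that in `w1`. It starts
at `0` and changes by at most one per letter, so it keeps one sign up to its first positive zero
`p`. Hence the length-`p` prefixes are comparable (that of `w0` is the smaller one iff `d ≥ 0`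
there, since the `i`-th x sits before position `t` iff the length-`t` prefix has more than `i`
x's); pairing them with an empty block on the correct side and recursing on the suffixes gives
the alternating decomposition. -/

lemma xIdx_cons (a : Bool) (w : Word) :
    xIdx (a :: w) = (if a = false then [0] else []) ++ (xIdx w).map (· + 1) := by
  unfold xIdx
  rw [List.length_cons, List.range_succ_eq_map, List.filter_cons, List.filter_map]
  cases a <;> simp [Function.comp_def]

lemma length_xIdx (w : Word) : (xIdx w).length = w.count false := by
  induction w with
  | nil => rfl
  | cons a w ih => cases a <;> simp [xIdx_cons, ih]

lemma getD_map_add_one (l : List ℕ) {i : ℕ} (hi : i < l.length) :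
    (l.map (· + 1)).getD i 0 = l.getD i 0 + 1 := by
  simp [hi]

lemma getD_xIdx_lt_iff (w : Word) {i : ℕ} (hi : i < w.count false) (t : ℕ) :
    (xIdx w).getD i 0 < t ↔ i < (w.take t).count false := by
  induction w generalizing i t with
  | nil => simp at hi
  | cons a w ih =>
    cases t with
    | zero => simp
    | succ s =>
      rw [List.take_succ_cons]
      cases a with
      | true =>
        have hi' : i < w.count false := by simpa using hi
        rw [xIdx_cons, if_neg Bool.true_eq_false.mp, List.nil_append,
          getD_map_add_one _ (length_xIdx w ▸ hi'), Nat.add_lt_add_iff_right, ih hi']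
        simp
      | false =>
        cases i with
        | zero => simp [xIdx_cons]
        | succ j =>
          have hj : j < w.count false := by simpa using hi
          rw [xIdx_cons, if_pos rfl, List.singleton_append, List.getD_cons_succ,
            getD_map_add_one _ (length_xIdx w ▸ hj), Nat.add_lt_add_iff_right, ih hj]
          simp

lemma wle_of_count_take_le {u v : Word} (hx : u.count false = v.count false)
    (hy : u.count true = v.count true)
    (hdom : ∀ t, (v.take t).count false ≤ (u.take t).count false) : wle u v := by
  refine ⟨hx, hy, fun i hi => ?_⟩
  have hv := (getD_xIdx_lt_iff v (hx ▸ hi) _).mp (Nat.lt_succ_self ((xIdx v).getD i 0))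
  exact Nat.lt_succ_iff.mp ((getD_xIdx_lt_iff u hi _).mpr (hv.trans_le (hdom _)))

lemma count_take_succ_le (l : List Bool) (a : Bool) (t : ℕ) :
    (l.take (t + 1)).count a ≤ (l.take t).count a + 1 := by
  rw [List.take_add_one, List.count_append, Nat.add_le_add_iff_left]
  exact List.count_le_length.trans (by cases l[t]? <;> simp)

lemma count_take_le_count_take_succ (l : List Bool) (a : Bool) (t : ℕ) :
    (l.take t).count a ≤ (l.take (t + 1)).count a :=
  ((List.take_prefix_take_left (Nat.le_succ t)).sublist).count_le a

def xExcess (w0 w1 : Word) (t : ℕ) : ℤ :=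
  ((w0.take t).count false : ℤ) - (w1.take t).count false

lemma xExcess_sub_one_le (w0 w1 : Word) (t : ℕ) :
    xExcess w0 w1 t - 1 ≤ xExcess w0 w1 (t + 1) := by
  have h0 := count_take_le_count_take_succ w0 false t
  have h1 := count_take_succ_le w1 false t
  unfold xExcess
  omega

lemma nonneg_of_sub_one_le_of_ne_zero (f : ℕ → ℤ) (hstep : ∀ t, f t - 1 ≤ f (t + 1))
    {p : ℕ} (h0 : f 0 = 0) (hp : f p = 0) (hne : ∀ t, 0 < t → t < p → f t ≠ 0)
    (h1 : 0 ≤ f 1) : ∀ t ≤ p, 0 ≤ f t := by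
  have hpos : ∀ t, 1 ≤ t → t < p → 0 < f t := by
    intro t ht htp
    induction t, ht using Nat.le_induction with
    | base => exact h1.lt_of_ne (hne 1 one_pos htp).symm
    | succ n hn ih =>
      exact (by linarith [ih (by omega), hstep n] : 0 ≤ f (n + 1)).lt_of_ne
        (hne (n + 1) n.succ_pos htp).symm
  intro t htp
  rcases Nat.eq_zero_or_pos t with rfl | ht0
  · exact h0.ge
  rcases htp.lt_or_eq with htp | rfl
  · exact (hpos t ht0 htp).le
  · exact hp.ge

lemma xExcess_swap (w0 w1 : Word) (t : ℕ) : xExcess w1 w0 t = -xExcess w0 w1 t := by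
  unfold xExcess; ring

lemma wle_take_of_xExcess_nonneg {w0 w1 : Word} {p : ℕ} (hp0 : p ≤ w0.length)
    (hp1 : p ≤ w1.length) (hp : xExcess w0 w1 p = 0) (h : ∀ t ≤ p, 0 ≤ xExcess w0 w1 t) :
    wle (w0.take p) (w1.take p) := by
  have hx : (w0.take p).count false = (w1.take p).count false := by
    unfold xExcess at hp; omega
  refine wle_of_count_take_le hx ?_ fun t => ?_
  · have h0 := List.count_false_add_count_true (w0.take p)
    have h1 := List.count_false_add_count_true (w1.take p)
    simp only [List.length_take] at h0 h1
    omega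
  · have := h (min t p) (min_le_right t p)
    simp only [List.take_take]
    unfold xExcess at this
    omega

lemma wle_or_wle_take_of_first_zero {w0 w1 : Word} {p : ℕ} (hp0 : p ≤ w0.length)
    (hp1 : p ≤ w1.length) (hp : xExcess w0 w1 p = 0)
    (hne : ∀ t, 0 < t → t < p → xExcess w0 w1 t ≠ 0) :
    wle (w0.take p) (w1.take p) ∨ wle (w1.take p) (w0.take p) := by
  have h0 : ∀ w0 w1 : Word, xExcess w0 w1 0 = 0 := fun _ _ => by simp [xExcess]
  rcases le_total 0 (xExcess w0 w1 1) with h1 | h1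
  · exact .inl <| wle_take_of_xExcess_nonneg hp0 hp1 hp <|
      nonneg_of_sub_one_le_of_ne_zero _ (xExcess_sub_one_le w0 w1) (h0 w0 w1) hp hne h1
  · have hp' : xExcess w1 w0 p = 0 := by rw [xExcess_swap, hp, neg_zero]
    have hne' : ∀ t, 0 < t → t < p → xExcess w1 w0 t ≠ 0 := fun t ht htp => by
      rw [xExcess_swap, neg_ne_zero]; exact hne t ht htp
    have h1' : 0 ≤ xExcess w1 w0 1 := by rw [xExcess_swap]; omega
    exact .inr <| wle_take_of_xExcess_nonneg hp1 hp0 hp' <|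
      nonneg_of_sub_one_le_of_ne_zero _ (xExcess_sub_one_le w1 w0) (h0 w1 w0) hp' hne' h1'

def AltDecomposition (w0 w1 : Word) : Prop :=
  ∃ (k : ℕ) (p0 p1 : List Word),
    p0.length = 2 * k ∧ p1.length = 2 * k ∧
    p0.flatten = w0 ∧ p1.flatten = w1 ∧
    ∀ i < 2 * k,
      if i % 2 = 0 then wle (p0.getD i []) (p1.getD i [])
      else wle (p1.getD i []) (p0.getD i [])

lemma wle_refl (w : Word) : wle w w := ⟨rfl, rfl, fun _ _ => le_rfl⟩

lemma altDecomposition_nil : AltDecomposition [] [] :=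
  ⟨0, [], [], rfl, rfl, rfl, rfl, by simp⟩

lemma AltDecomposition.append {a0 a1 b0 b1 w0 w1 : Word} (ha : wle a0 a1) (hb : wle b1 b0)
    (hw : AltDecomposition w0 w1) : AltDecomposition (a0 ++ b0 ++ w0) (a1 ++ b1 ++ w1) := by
  obtain ⟨k, p0, p1, hl0, hl1, rfl, rfl, hp⟩ := hw
  refine ⟨k + 1, a0 :: b0 :: p0, a1 :: b1 :: p1, by simp [hl0]; ring, by simp [hl1]; ring,
    by simp, by simp, fun i hi => ?_⟩
  match i with
  | 0 => exact ha
  | 1 => exact hb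
  | j + 2 => simpa [Nat.add_mod_right] using hp j (by omega)

lemma AltDecomposition.append_of_wle_or_wle {u v w0 w1 : Word} (huv : wle u v ∨ wle v u)
    (hw : AltDecomposition w0 w1) : AltDecomposition (u ++ w0) (v ++ w1) := by
  rcases huv with h | h
  · simpa using hw.append h (wle_refl [])
  · simpa using hw.append (wle_refl []) h

theorem altDecomposition_of_length_eq_of_count_eq {w0 w1 : Word} (hlen : w0.length = w1.length)
    (hx : w0.count false = w1.count false) : AltDecomposition w0 w1 := by
  induction hn : w0.length using Nat.strong_induction_on generalizing w0 w1 with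
  | _ n ih =>
  rcases Nat.eq_zero_or_pos w0.length with h0 | hpos
  · rw [List.length_eq_zero_iff.mp h0, List.length_eq_zero_iff.mp (hlen ▸ h0 : w1.length = 0)]
    exact altDecomposition_nil
  have hend : xExcess w0 w1 w0.length = 0 := by
    simp [xExcess, List.take_of_length_le hlen.ge, hx]
  have hex : ∃ t, 0 < t ∧ xExcess w0 w1 t = 0 := ⟨w0.length, hpos, hend⟩
  obtain ⟨hp_pos, hp⟩ := Nat.find_spec hex
  set p := Nat.find hex
  have hpl : p ≤ w0.length := Nat.find_min' hex ⟨hpos, hend⟩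
  have hcomp := wle_or_wle_take_of_first_zero hpl (hlen ▸ hpl) hp
    fun t ht htp hzero => Nat.find_min hex htp ⟨ht, hzero⟩
  have hrest : AltDecomposition (w0.drop p) (w1.drop p) := by
    refine ih _ (by simp only [List.length_drop]; omega) (by simp [hlen]) ?_ rfl
    have h0 := @List.count_append _ _ false (w0.take p) (w0.drop p)
    have h1 := @List.count_append _ _ false (w1.take p) (w1.drop p)
    simp only [List.take_append_drop, xExcess] at h0 h1 hp
    omega
  simpa using hrest.append_of_wle_or_wle hcomp

/-- Any two words with equal letter counts admit decompositions into
`2k` corresponding subwords with equal letter counts, alternately comparable: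
`w0^i ≤ w1^i` for even `i` and `w1^i ≤ w0^i` for odd `i`. -/
theorem stmt4 (w0 w1 : Word)
    (hx : w0.count false = w1.count false)
    (hy : w0.count true = w1.count true) :
    ∃ (k : ℕ) (p0 p1 : List Word),
      p0.length = 2 * k ∧ p1.length = 2 * k ∧
      p0.flatten = w0 ∧ p1.flatten = w1 ∧
      ∀ i < 2 * k,
        if i % 2 = 0 then wle (p0.getD i []) (p1.getD i [])
        else wle (p1.getD i []) (p0.getD i []) :=
  altDecomposition_of_length_eq_of_count_eq
    (by rw [← List.count_false_add_count_true, hx, hy, List.count_false_add_count_true]) hx
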